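/- Let (Ω,𝒜,ℙ) be a probability space, V an H-valued random variable with law μ₀, Y an ℝᴺ-valued random variable, and Q a regular conditional distribution for Y given V. Suppose there is a probability measure γ on ℝᴺ with Q(v,·) ≪ γ for every v ∈ H, with jointly measurable density ρ(v,y) = dQ(v,·)/dγ(y). Define Z(y) = ∫_H ρ(v,y) μ₀(dv) and let μ(y,·) be the measure with density ρ(v,y)/Z(y) against μ₀ when Z(y) > 0, and an arbitrary fixed probability measure otherwise. Then for all bounded measurable φ : H → ℝ and all Borel B ⊆ ℝᴺ, E[φ(V) 1_{Y ∈ B}] = E[(∫_H φ(v) μ(Y, dv)) 1_{Y ∈ B}]; that is, μ is a regular conditional distribution for V given Y. -/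

import Mathlib

open MeasureTheory
open scoped ENNReal

/-!
Conditioning on `σ(V)` gives `ℙ(V ∈ A, Y ∈ B) = ∫_A Q(v, B) μ₀(dv) = ∫_B ∫_A ρ(v, y) μ₀(dv) γ(dy)`
(Tonelli). Taking `A = H` shows `law(Y) = Z • γ`, so `Z < ∞` `γ`-a.e., and wherever `Z(y) < ∞`
the definition of `μ` gives `Z(y) μ(y, A) = ∫_A ρ(v, y) μ₀(dv)` (both sides vanish if `Z(y) = 0`).
Hence the joint law of `(Y, V)` agrees with `law(Y) ⊗ μ` on rectangles, so everywhere, and the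
identity is Fubini for this composition-product.
-/

open ProbabilityTheory

section Posterior

variable {H E : Type*} [MeasurableSpace H] {μ₀ : Measure H} {ρ : H → E → ℝ≥0∞}
  {Z : E → ℝ≥0∞} {ν : Measure H} {μ : E → Measure H}

theorem mul_posterior_apply (hZ : ∀ y, Z y = ∫⁻ v, ρ v y ∂μ₀)
    (hμpos : ∀ y, Z y ≠ 0 → μ y = (Z y)⁻¹ • μ₀.withDensity (fun v => ρ v y))
    {y : E} (hy : Z y ≠ ∞) {A : Set H} (hA : MeasurableSet A) :
    Z y * μ y A = ∫⁻ v in A, ρ v y ∂μ₀ := by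
  by_cases h0 : Z y = 0
  · rw [h0, zero_mul, eq_comm, ← nonpos_iff_eq_zero]
    calc ∫⁻ v in A, ρ v y ∂μ₀ ≤ ∫⁻ v, ρ v y ∂μ₀ := setLIntegral_le_lintegral _ _
      _ = 0 := by rw [← hZ, h0]
  · rw [hμpos y h0, Measure.smul_apply, smul_eq_mul, withDensity_apply _ hA, ← mul_assoc,
      ENNReal.mul_inv_cancel h0 hy, one_mul]

theorem posterior_apply_univ_le_one [IsProbabilityMeasure ν] (hZ : ∀ y, Z y = ∫⁻ v, ρ v y ∂μ₀)
    (hμpos : ∀ y, Z y ≠ 0 → μ y = (Z y)⁻¹ • μ₀.withDensity (fun v => ρ v y))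
    (hμzero : ∀ y, Z y = 0 → μ y = ν) (y : E) : μ y Set.univ ≤ 1 := by
  by_cases h0 : Z y = 0
  · simp [hμzero y h0]
  · rw [hμpos y h0, Measure.smul_apply, smul_eq_mul, withDensity_apply _ .univ,
      Measure.restrict_univ, ← hZ]
    exact ENNReal.inv_mul_le_one _

variable [MeasurableSpace E]

theorem setLIntegral_withDensity_apply_eq_setLIntegral_setLIntegral [SFinite μ₀]
    {γ : Measure E} [SFinite γ] (hρ : Measurable (Function.uncurry ρ))
    {A : Set H} {B : Set E} (hB : MeasurableSet B) :
    ∫⁻ v in A, γ.withDensity (ρ v) B ∂μ₀ = ∫⁻ y in B, ∫⁻ v in A, ρ v y ∂μ₀ ∂γ := by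
  simp_rw [withDensity_apply _ hB]
  exact lintegral_lintegral_swap hρ.aemeasurable

theorem measurable_posterior [SFinite μ₀] (hρ : Measurable (Function.uncurry ρ))
    (hZ : ∀ y, Z y = ∫⁻ v, ρ v y ∂μ₀)
    (hμpos : ∀ y, Z y ≠ 0 → μ y = (Z y)⁻¹ • μ₀.withDensity (fun v => ρ v y))
    (hμzero : ∀ y, Z y = 0 → μ y = ν) : Measurable μ := by
  refine Measure.measurable_of_measurable_coe _ fun A hA => ?_
  have hZm : Measurable Z := by rw [funext hZ]; exact hρ.lintegral_prod_left'
  have hμA : (fun y => μ y A)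
      = fun y => if Z y = 0 then ν A else (Z y)⁻¹ * ∫⁻ v in A, ρ v y ∂μ₀ := by
    funext y
    split_ifs with h
    · rw [hμzero y h]
    · rw [hμpos y h, Measure.smul_apply, smul_eq_mul, withDensity_apply _ hA]
  rw [hμA]
  exact Measurable.ite (hZm (measurableSet_singleton 0)) measurable_const
    (hZm.inv.mul hρ.lintegral_prod_left')

end Posterior

section JointLaw

variable {Ω H E : Type*} [MeasurableSpace Ω] [MeasurableSpace H] [MeasurableSpace E]
  {P : Measure Ω} {V : Ω → H} {Y : Ω → E}

theorem measure_preimage_inter_preimage_eq_setLIntegral_of_condExp [IsFiniteMeasure P]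
    (hV : Measurable V) (hY : Measurable Y) {Q : H → Measure E} [∀ v, IsFiniteMeasure (Q v)]
    {A : Set H} {B : Set E} (hA : MeasurableSet A) (hB : MeasurableSet B)
    (hQmeas : Measurable fun v => Q v B)
    (hQcond : (fun ω => (Q (V ω) B).toReal)
      =ᵐ[P] P[fun ω => B.indicator (fun _ => (1 : ℝ)) (Y ω) |
        MeasurableSpace.comap V inferInstance]) :
    P (V ⁻¹' A ∩ Y ⁻¹' B) = ∫⁻ v in A, Q v B ∂(P.map V) := by
  have hVA : MeasurableSet[MeasurableSpace.comap V inferInstance] (V ⁻¹' A) := ⟨A, hA, rfl⟩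
  have hind : (fun ω => B.indicator (fun _ => (1 : ℝ)) (Y ω)) = (Y ⁻¹' B).indicator 1 := by
    funext ω; by_cases h : Y ω ∈ B <;> simp [h]
  have hQint : Integrable (fun ω => (Q (V ω) B).toReal) P :=
    integrable_condExp.congr hQcond.symm
  have hind_int : Integrable (fun ω => B.indicator (fun _ => (1 : ℝ)) (Y ω)) P := by
    rw [hind]; exact (integrable_const 1).indicator (hY hB)
  have hset : ∫ ω in V ⁻¹' A, (Q (V ω) B).toReal ∂P = P.real (V ⁻¹' A ∩ Y ⁻¹' B) := by
    rw [setIntegral_congr_ae (hV hA) (hQcond.mono fun _ h _ => h),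
      setIntegral_condExp hV.comap_le hind_int hVA, hind, integral_indicator_one (hY hB),
      measureReal_restrict_apply (hY hB), Set.inter_comm]
  rw [setLIntegral_map hA hQmeas hV, ← ENNReal.ofReal_toReal (measure_ne_top P _),
    ← measureReal_def, ← hset, ofReal_integral_eq_lintegral_ofReal hQint.restrict
      (ae_of_all _ fun _ => ENNReal.toReal_nonneg)]
  exact lintegral_congr fun ω => ENNReal.ofReal_toReal (measure_ne_top _ _)

theorem map_prodMk_eq_compProd_of_mul_kernel_apply [IsFiniteMeasure P] (hV : Measurable V)
    (hY : Measurable Y) {μ₀ : Measure H} [SFinite μ₀] {γ : Measure E} [SFinite γ]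
    {ρ : H → E → ℝ≥0∞} (hρ : Measurable (Function.uncurry ρ))
    (hjoint : ∀ {A : Set H} {B : Set E}, MeasurableSet A → MeasurableSet B →
      P (V ⁻¹' A ∩ Y ⁻¹' B) = ∫⁻ y in B, ∫⁻ v in A, ρ v y ∂μ₀ ∂γ)
    {Z : E → ℝ≥0∞} (hZ : ∀ y, Z y = ∫⁻ v, ρ v y ∂μ₀) {κ : Kernel E H} [IsSFiniteKernel κ]
    (hκ : ∀ y, Z y ≠ ∞ → ∀ {A : Set H}, MeasurableSet A → Z y * κ y A = ∫⁻ v in A, ρ v y ∂μ₀) :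
    P.map (fun ω => (Y ω, V ω)) = P.map Y ⊗ₘ κ := by
  have hZm : Measurable Z := by rw [funext hZ]; exact hρ.lintegral_prod_left'
  have hlaw : P.map Y = γ.withDensity Z := by
    ext B hB
    rw [Measure.map_apply hY hB, ← Set.univ_inter (Y ⁻¹' B), ← Set.preimage_univ (f := V),
      hjoint .univ hB, withDensity_apply _ hB]
    simp_rw [Measure.restrict_univ, hZ]
  have hZfin : ∀ᵐ y ∂γ, Z y ≠ ∞ := by
    refine (ae_lt_top hZm ?_).mono fun _ => LT.lt.ne
    rw [← Measure.restrict_univ (μ := γ), ← withDensity_apply _ .univ, ← hlaw]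
    exact measure_ne_top _ _
  refine Measure.ext_prod fun {B A} hB hA => ?_
  rw [Measure.map_apply (hY.prodMk hV) (hB.prod hA), Set.mk_preimage_prod, Set.inter_comm,
    hjoint hA hB, Measure.compProd_apply_prod hB hA, hlaw,
    setLIntegral_withDensity_eq_setLIntegral_mul _ hZm (κ.measurable_coe hA) hB]
  exact lintegral_congr_ae ((ae_restrict_of_ae hZfin).mono fun y hy => (hκ y hy hA).symm)

theorem integral_comp_eq_integral_integral_of_map_eq_compProd [IsFiniteMeasure P]
    (hV : Measurable V) (hY : Measurable Y) {κ : Kernel E H} [IsSFiniteKernel κ]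
    (hκ : P.map (fun ω => (Y ω, V ω)) = P.map Y ⊗ₘ κ) {F : Type*} [NormedAddCommGroup F]
    [NormedSpace ℝ F] {f : E × H → F} (hf : StronglyMeasurable f)
    (hfi : Integrable f (P.map Y ⊗ₘ κ)) :
    ∫ ω, f (Y ω, V ω) ∂P = ∫ ω, ∫ v, f (Y ω, v) ∂κ (Y ω) ∂P := by
  rw [← integral_map (hY.prodMk hV).aemeasurable hf.aestronglyMeasurable, hκ,
    Measure.integral_compProd hfi,
    integral_map hY.aemeasurable hf.integral_kernel_prod_right'.aestronglyMeasurable]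

end JointLaw

/-- General Bayes' theorem: if `Q` is a regular conditional distribution for `Y` given `V`,
with `Q v = γ.withDensity (ρ v)` for a jointly measurable density `ρ`, `Z y = ∫ ρ(v,y) μ₀(dv)`
(`μ₀ = law(V)`), and `μ y` is the normalized reweighting of `μ₀` by `ρ(·,y)` when `Z y > 0`
(an arbitrary fixed probability measure otherwise), then for all bounded measurable `φ` and
Borel `B`, `E[φ(V) 1_{Y∈B}] = E[(∫ φ dμ(Y)) 1_{Y∈B}]`; i.e. `μ` is a regular conditional
distribution for `V` given `Y`. -/
theorem stmt_12 {Ω H : Type*} [MeasurableSpace Ω] [MeasurableSpace H]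
    (P : Measure Ω) [IsProbabilityMeasure P] (n : ℕ)
    (V : Ω → H) (hV : Measurable V)
    (Y : Ω → (Fin n → ℝ)) (hY : Measurable Y)
    (Q : H → Measure (Fin n → ℝ)) [∀ v, IsProbabilityMeasure (Q v)]
    (hQmeas : ∀ A : Set (Fin n → ℝ), MeasurableSet A → Measurable (fun v => Q v A))
    (hQcond : ∀ A : Set (Fin n → ℝ), MeasurableSet A →
      (fun ω => (Q (V ω) A).toReal)
        =ᵐ[P] P[fun ω => Set.indicator A (fun _ => (1 : ℝ)) (Y ω) |
              MeasurableSpace.comap V inferInstance])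
    (γ : Measure (Fin n → ℝ)) [IsProbabilityMeasure γ]
    (ρ : H → (Fin n → ℝ) → ℝ≥0∞) (hρ : Measurable (Function.uncurry ρ))
    (hQγ : ∀ v, Q v = γ.withDensity (ρ v))
    (Z : (Fin n → ℝ) → ℝ≥0∞) (hZ : ∀ y, Z y = ∫⁻ v, ρ v y ∂(Measure.map V P))
    (ν : Measure H) [IsProbabilityMeasure ν]
    (μ : (Fin n → ℝ) → Measure H)
    (hμpos : ∀ y, Z y ≠ 0 →
      μ y = (Z y)⁻¹ • (Measure.map V P).withDensity (fun v => ρ v y))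
    (hμzero : ∀ y, Z y = 0 → μ y = ν) :
    ∀ φ : H → ℝ, Measurable φ → (∃ M : ℝ, ∀ v, |φ v| ≤ M) →
      ∀ B : Set (Fin n → ℝ), MeasurableSet B →
        ∫ ω, φ (V ω) * Set.indicator B (fun _ => (1 : ℝ)) (Y ω) ∂P
          = ∫ ω, (∫ v, φ v ∂(μ (Y ω))) * Set.indicator B (fun _ => (1 : ℝ)) (Y ω) ∂P := by
  have hjoint {A : Set H} {B : Set (Fin n → ℝ)} (hA : MeasurableSet A) (hB : MeasurableSet B) :
      P (V ⁻¹' A ∩ Y ⁻¹' B) = ∫⁻ y in B, ∫⁻ v in A, ρ v y ∂(P.map V) ∂γ := by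
    rw [measure_preimage_inter_preimage_eq_setLIntegral_of_condExp hV hY hA hB (hQmeas B hB)
      (hQcond B hB)]
    simp_rw [hQγ]
    exact setLIntegral_withDensity_apply_eq_setLIntegral_setLIntegral hρ hB
  let κ : Kernel (Fin n → ℝ) H := ⟨μ, measurable_posterior hρ hZ hμpos hμzero⟩
  have : IsFiniteKernel κ :=
    ⟨⟨1, ENNReal.one_lt_top, posterior_apply_univ_le_one hZ hμpos hμzero⟩⟩
  have hdis : P.map (fun ω => (Y ω, V ω)) = P.map Y ⊗ₘ κ :=
    map_prodMk_eq_compProd_of_mul_kernel_apply hV hY hρ hjoint hZ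
      fun _ hy _ hA => mul_posterior_apply hZ hμpos hy hA
  rintro φ hφ ⟨M, hM⟩ B hB
  let f : (Fin n → ℝ) × H → ℝ := fun p => φ p.2 * B.indicator (fun _ => 1) p.1
  have hf : Measurable f :=
    (hφ.comp measurable_snd).mul ((measurable_const.indicator hB).comp measurable_fst)
  have hfM (p) : ‖f p‖ ≤ M := by
    rw [norm_mul, Real.norm_eq_abs]
    refine (mul_le_of_le_one_right (abs_nonneg _) ?_).trans (hM p.2)
    by_cases h : p.1 ∈ B <;> simp [h]
  have hfubini := integral_comp_eq_integral_integral_of_map_eq_compProd hV hY hdis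
    hf.stronglyMeasurable (.of_bound hf.aestronglyMeasurable M (ae_of_all _ hfM))
  simp only [f, integral_mul_const] at hfubini
  exact hfubini
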